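/- A partitioned permutation of {1,…,n} is a pair (𝒱, π) with π ∈ S_n and 𝒱 a partition of {1,…,n} with 0_π ≤ 𝒱, and its length is |(𝒱,π)| := 2|𝒱| − |π|. Then for all partitioned permutations (𝒱,π) and (𝒲,σ) of {1,…,n}: |(𝒱 ∨ 𝒲, πσ)| ≤ |(𝒱,π)| + |(𝒲,σ)|. -/

import Mathlib

/-- The partition of `{1,…,n}` into orbits (cycles) of a permutation, as a setoid. -/
def orbitSetoid {α : Type*} (π : Equiv.Perm α) : Setoid α where
  r := π.SameCycle
  iseqv := ⟨fun x => Equiv.Perm.SameCycle.refl π x, fun h => h.symm, fun h h' => h.trans h'⟩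

/-- The length `|𝒰| := n − #𝒰` of a partition of `{1,…,n}`, where `#𝒰` is the number of
blocks. -/
noncomputable def pLen {n : ℕ} (V : Setoid (Fin n)) : ℤ :=
  (n : ℤ) - Nat.card (Quotient V)

/-- The length `|π| := n − #π` of a permutation, where `#π` is the number of cycles
(orbits) of `π`. -/
noncomputable def permLen {n : ℕ} (π : Equiv.Perm (Fin n)) : ℤ :=
  (n : ℤ) - Nat.card (Quotient (orbitSetoid π))

/-- A partitioned permutation of `{1,…,n}`: a pair `(𝒱, π)` with `π ∈ S_n` and `𝒱` a
partition of `{1,…,n}` with `0_π ≤ 𝒱` (the orbit partition of `π` refines `𝒱`). -/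
structure PartitionedPerm (n : ℕ) where
  part : Setoid (Fin n)
  perm : Equiv.Perm (Fin n)
  hle : orbitSetoid perm ≤ part

/-- The length `|(𝒱,π)| := 2|𝒱| − |π|` of a partitioned permutation. -/
noncomputable def ppLen {n : ℕ} (a : PartitionedPerm n) : ℤ :=
  2 * pLen a.part - permLen a.perm

/-!
Write `#𝒰` for the number of blocks of `𝒰`. The triangle inequality is the sum of two facts.

The genus inequality `#π + #σ + #(πσ) ≤ n + 2 #(0_π ∨ 0_σ)` is proved by induction on the
support of `σ`, replacing `(π, σ)` by `(π (a b), (a b) σ)` with `b = σ a`: this keeps the product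
and adds one cycle to `σ`. Adjoining the relation `a ~ b` makes the orbit partitions of `π` and
`π (a b)` equal (likewise for `σ` and `(a b) σ`), and `π (a b)` relates `a` and `b` whenever `π`
does not; this controls how `#π` and `#(0_π ∨ 0_σ)` change.

Semimodularity of the partition lattice, `#(𝒫 ∨ 𝒮) + #𝒱 + #𝒲 ≤ #𝒫 + #𝒮 + #(𝒱 ∨ 𝒲)` for
`𝒫 ≤ 𝒱` and `𝒮 ≤ 𝒲`, follows by coarsening `𝒫` towards `𝒱` one pair of blocks at a time, since
merging two blocks lowers the number of blocks of any join by at most one. Apply it to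
`𝒫 = 0_π`, `𝒮 = 0_σ`, twice, and add the genus inequality.
-/
open Equiv Equiv.Perm

local notation "#" X:max => Nat.card (Quotient X)

namespace Setoid

variable {α : Type*} {X Y : Setoid α} {a b : α}

def merge (X : Setoid α) (a b : α) : Setoid α :=
  X ⊔ Relation.EqvGen.setoid (fun x y => x = a ∧ y = b)

theorem merge_le_iff : X.merge a b ≤ Y ↔ X ≤ Y ∧ Y a b := by
  refine sup_le_iff.trans (and_congr_right fun _ => ⟨fun h => h ?_, fun hab => ?_⟩)
  · exact Relation.EqvGen.rel _ _ ⟨rfl, rfl⟩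
  · exact eqvGen_le fun x y ⟨hx, hy⟩ => hx ▸ hy ▸ hab

theorem le_merge : X ≤ X.merge a b := le_sup_left

theorem merge_rel : X.merge a b a b := (merge_le_iff.mp le_rfl).2

theorem merge_eq_self (h : X a b) : X.merge a b = X :=
  le_antisymm (merge_le_iff.mpr ⟨le_rfl, h⟩) le_merge

theorem merge_sup : (X ⊔ Y).merge a b = X.merge a b ⊔ Y.merge a b := by
  unfold merge
  exact sup_sup_distrib_right X Y _

theorem card_quotient_merge_add_one [Finite α] (h : ¬ X a b) : #(X.merge a b) + 1 = #X := by
  classical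
  -- `X.merge a b` is the kernel of `x ↦ g ⟦x⟧`, where `g` sends `⟦b⟧` to `⟦a⟧` and fixes the rest.
  let g := Function.update id ⟦b⟧ (⟦a⟧ : Quotient X)
  have hab : (⟦a⟧ : Quotient X) ≠ ⟦b⟧ := fun h' => h (Quotient.exact h')
  have hker : X.merge a b = ker (g ∘ Quotient.mk X) := by
    refine le_antisymm (merge_le_iff.mpr ⟨fun x y hxy => congrArg g (Quotient.sound hxy), ?_⟩) ?_
    · simp [g, ker_def, Function.update_of_ne hab]
    let φ : Quotient X → Quotient (X.merge a b) := map_of_le le_merge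
    have hφg : φ ∘ g = φ := by
      funext c
      by_cases hc : c = ⟦b⟧
      · simp only [g, hc, Function.comp_apply, Function.update_self]
        exact Quotient.sound merge_rel
      · simp [g, Function.update_of_ne hc]
    intro x y hxy
    apply Quotient.exact
    calc (⟦x⟧ : Quotient (X.merge a b)) = φ (g ⟦x⟧) := (congrFun hφg ⟦x⟧).symm
      _ = φ (g ⟦y⟧) := congrArg φ (ker_def.mp hxy)
      _ = ⟦y⟧ := congrFun hφg ⟦y⟧
  have hrange : Set.range g = {⟦b⟧}ᶜ := by
    ext c
    refine ⟨?_, fun hc => ⟨c, Function.update_of_ne hc _ _⟩⟩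
    rintro ⟨d, rfl⟩
    by_cases hd : d = ⟦b⟧
    · simpa [g, hd] using hab
    · simpa [g, Function.update_of_ne hd] using hd
  rw [hker, Nat.card_congr (quotientKerEquivRange _), Quotient.mk_surjective.range_comp, hrange,
    Nat.card_coe_set_eq, Set.ncard_compl, Set.ncard_singleton]
  have : Nonempty (Quotient X) := ⟨⟦a⟧⟩
  have : 0 < #X := Nat.card_pos
  omega

theorem card_quotient_le_merge_add_one [Finite α] : #X ≤ #(X.merge a b) + 1 := by
  by_cases h : X a b
  · rw [merge_eq_self h]; omega
  · exact (card_quotient_merge_add_one h).ge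

theorem exists_rel_not_rel_of_lt (h : X < Y) : ∃ a b, Y a b ∧ ¬ X a b := by
  by_contra! hXY
  exact h.ne (le_antisymm h.le fun x y => hXY x y)

-- Semimodularity of the lattice of equivalence relations.
theorem card_quotient_add_card_quotient_sup_le [Finite α] {P V : Setoid α} (S : Setoid α)
    (hPV : P ≤ V) : #V + #(P ⊔ S) ≤ #P + #(V ⊔ S) := by
  induction hk : #P using Nat.strong_induction_on generalizing P with
  | _ k ih =>
  obtain rfl | hlt := hPV.eq_or_lt
  · omega
  obtain ⟨a, b, hV, hP⟩ := exists_rel_not_rel_of_lt hlt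
  have hcard := card_quotient_merge_add_one hP
  have hmerge := ih _ (by omega) (merge_le_iff.mpr ⟨hPV, hV⟩) rfl
  have hsup := card_quotient_le_merge_add_one (X := P ⊔ S) (a := a) (b := b)
  rw [show (P ⊔ S).merge a b = P.merge a b ⊔ S from sup_right_comm _ _ _] at hsup
  omega

theorem card_quotient_sup_add_le [Finite α] {P S V W : Setoid α} (hPV : P ≤ V) (hSW : S ≤ W) :
    #(P ⊔ S) + #V + #W ≤ #P + #S + #(V ⊔ W) := by
  have hP := card_quotient_add_card_quotient_sup_le S hPV
  have hS := card_quotient_add_card_quotient_sup_le V hSW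
  rw [sup_comm S V, sup_comm W V] at hS
  omega

theorem rel_swap_apply [DecidableEq α] {r : Setoid α} (h : r a b) (x : α) :
    r x (swap a b x) := by
  rcases eq_or_ne x a with rfl | hxa
  · rwa [swap_apply_left]
  rcases eq_or_ne x b with rfl | hxb
  · rw [swap_apply_right]; exact r.symm' h
  · rw [swap_apply_of_ne_of_ne hxa hxb]

end Setoid

section Orbits

variable {α : Type*} {γ : Perm α} {a b : α}

theorem orbitSetoid_le_iff [Finite α] {r : Setoid α} : orbitSetoid γ ≤ r ↔ ∀ x, r x (γ x) := by
  refine ⟨fun h x => h (sameCycle_apply_right.mpr (SameCycle.refl γ x)), fun h x y hxy => ?_⟩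
  obtain ⟨k, rfl⟩ := hxy.exists_nat_pow_eq
  clear hxy
  induction k with
  | zero => exact r.refl' x
  | succ k ih => rw [pow_succ', Perm.mul_apply]; exact r.trans' ih (h _)

theorem orbitSetoid_inv : orbitSetoid γ⁻¹ = orbitSetoid γ :=
  Setoid.ext fun _ _ => sameCycle_inv

theorem orbitSetoid_one : orbitSetoid (1 : Perm α) = ⊥ :=
  Setoid.ext fun _ _ => sameCycle_one

variable [DecidableEq α] [Finite α]

theorem orbitSetoid_le_merge_orbitSetoid_mul_swap :
    orbitSetoid γ ≤ (orbitSetoid (γ * swap a b)).merge a b := by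
  refine orbitSetoid_le_iff.mpr fun x => ?_
  have hx : γ x = (γ * swap a b) (swap a b x) := by simp
  rw [hx]
  exact Setoid.trans' _ (Setoid.rel_swap_apply Setoid.merge_rel x)
    (Setoid.le_merge (sameCycle_apply_right.mpr (SameCycle.refl _ _)))

theorem merge_orbitSetoid_mul_swap :
    (orbitSetoid (γ * swap a b)).merge a b = (orbitSetoid γ).merge a b := by
  refine le_antisymm (Setoid.merge_le_iff.mpr ⟨?_, Setoid.merge_rel⟩)
    (Setoid.merge_le_iff.mpr ⟨orbitSetoid_le_merge_orbitSetoid_mul_swap, Setoid.merge_rel⟩)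
  simpa using orbitSetoid_le_merge_orbitSetoid_mul_swap (γ := γ * swap a b) (a := a) (b := b)

theorem merge_orbitSetoid_swap_mul :
    (orbitSetoid (swap a b * γ)).merge a b = (orbitSetoid γ).merge a b := by
  rw [← orbitSetoid_inv, mul_inv_rev, swap_inv, merge_orbitSetoid_mul_swap, orbitSetoid_inv]

theorem Equiv.Perm.sameCycle_mul_swap_of_not_sameCycle (h : ¬ γ.SameCycle a b) :
    (γ * swap a b).SameCycle a b := by
  have hreach : ∀ k : ℕ,
      (γ * swap a b).SameCycle a b ∨ (γ * swap a b).SameCycle a ((γ ^ (k + 1)) b) := by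
    intro k
    induction k with
    | zero => exact Or.inr ⟨1, by simp⟩
    | succ k ih =>
      refine ih.elim Or.inl fun hk => ?_
      set y := (γ ^ (k + 1)) b
      by_cases hyb : y = b
      · exact Or.inl (hyb ▸ hk)
      have hyb' : γ.SameCycle y b := (sameCycle_pow_right.mpr (SameCycle.refl γ b)).symm
      have hya : y ≠ a := fun hya => h (hya ▸ hyb')
      have hy : (γ * swap a b) y = (γ ^ (k + 1 + 1)) b := by
        rw [Perm.mul_apply, swap_apply_of_ne_of_ne hya hyb, pow_succ' γ (k + 1), Perm.mul_apply]
      exact Or.inr (hy ▸ hk.trans (sameCycle_apply_right.mpr (SameCycle.refl _ _)))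
  have hord : orderOf γ - 1 + 1 = orderOf γ := Nat.sub_add_cancel (orderOf_pos γ)
  simpa [hord, pow_orderOf_eq_one] using hreach (orderOf γ - 1)

end Orbits

section Genus

open Setoid

variable {α : Type*} [Fintype α] [DecidableEq α]

theorem card_orbits_add_card_orbits_add_two_mul_card_sup_swap_le {π σ : Perm α} {a : α}
    (ha : σ a ≠ a) :
    #(orbitSetoid π) + #(orbitSetoid σ) +
        2 * #(orbitSetoid (π * swap a (σ a)) ⊔ orbitSetoid (swap a (σ a) * σ)) ≤
      #(orbitSetoid (π * swap a (σ a))) + #(orbitSetoid (swap a (σ a) * σ)) +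
        2 * #(orbitSetoid π ⊔ orbitSetoid σ) := by
  -- `swap a b * σ` cuts `a` out of its cycle; `π * swap a b` splits or joins cycles of `π`.
  set b := σ a
  set J := orbitSetoid π ⊔ orbitSetoid σ
  set J' := orbitSetoid (π * swap a b) ⊔ orbitSetoid (swap a b * σ)
  have hσab : orbitSetoid σ a b := sameCycle_apply_right.mpr (SameCycle.refl σ a)
  have hσ' : #(orbitSetoid (swap a b * σ)) = #(orbitSetoid σ) + 1 := by
    have hfix : (swap a b * σ) a = a := by simp [b]
    have hsplit : ¬ orbitSetoid (swap a b * σ) a b := fun h => ha (h.eq_of_left hfix).symm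
    rw [← card_quotient_merge_add_one hsplit, merge_orbitSetoid_swap_mul, merge_eq_self hσab]
  have hJ : J'.merge a b = J := by
    rw [merge_sup, merge_orbitSetoid_mul_swap, merge_orbitSetoid_swap_mul, ← merge_sup,
      merge_eq_self (le_sup_right (a := orbitSetoid π) hσab)]
  by_cases hπ' : orbitSetoid (π * swap a b) a b
  · have hJ'ab : J' a b := le_sup_left (b := orbitSetoid (swap a b * σ)) hπ'
    have hJJ' : J' = J := (merge_eq_self hJ'ab).symm.trans hJ
    have hπ : #(orbitSetoid π) ≤ #(orbitSetoid (π * swap a b)) + 1 := by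
      have := card_quotient_le_merge_add_one (X := orbitSetoid π) (a := a) (b := b)
      rwa [← merge_orbitSetoid_mul_swap, merge_eq_self hπ'] at this
    rw [hJJ']
    omega
  · have hπab : orbitSetoid π a b := by
      by_contra hπab
      simpa using hπ' (sameCycle_mul_swap_of_not_sameCycle hπab)
    have hπ : #(orbitSetoid (π * swap a b)) = #(orbitSetoid π) + 1 := by
      rw [← card_quotient_merge_add_one hπ', merge_orbitSetoid_mul_swap, merge_eq_self hπab]
    have hJ'J : #J' ≤ #J + 1 := hJ ▸ card_quotient_le_merge_add_one
    omega

theorem card_orbits_add_card_orbits_add_card_orbits_mul_le (π σ : Perm α) :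
    #(orbitSetoid π) + #(orbitSetoid σ) + #(orbitSetoid (π * σ)) ≤
      Nat.card α + 2 * #(orbitSetoid π ⊔ orbitSetoid σ) := by
  induction h : σ.support.card using Nat.strong_induction_on generalizing π σ with
  | _ k ih =>
  rcases eq_or_ne σ 1 with rfl | hσ
  · rw [orbitSetoid_one, sup_bot_eq, mul_one, Nat.card_congr quotientBotEquiv]
    omega
  obtain ⟨a, ha⟩ : ∃ a, σ a ≠ a := not_forall.mp fun h => hσ (Equiv.ext h)
  have hind := ih _ (h ▸ card_support_swap_mul ha) (π * swap a (σ a)) (swap a (σ a) * σ) rfl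
  rw [mul_assoc, swap_mul_self_mul] at hind
  have hstep := card_orbits_add_card_orbits_add_two_mul_card_sup_swap_le (π := π) ha
  omega

end Genus

/-- Triangle inequality for partitioned permutations:
`|(𝒱 ∨ 𝒲, πσ)| ≤ |(𝒱,π)| + |(𝒲,σ)|`. -/
theorem ppLen_triangle {n : ℕ} (a b : PartitionedPerm n) :
    2 * pLen (a.part ⊔ b.part) - permLen (a.perm * b.perm) ≤ ppLen a + ppLen b := by
  have hgenus := card_orbits_add_card_orbits_add_card_orbits_mul_le a.perm b.perm
  have hpart := Setoid.card_quotient_sup_add_le a.hle b.hle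
  rw [Nat.card_fin] at hgenus
  simp only [ppLen, pLen, permLen]
  omega
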